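/- arXiv:0705.4312 — 3 statements merged into one kernel-verified Lean document; each statement's English description precedes it below -/
import Mathlib

section
/- Let Θ be the standard simplex in ℝ^k, let n'₁, …, n'_k be nonnegative integers with N' = Σ_i n'_i > 0, let g(θ) = ∏_{i=1}^k θ_i^{n'_i}, and let f' = (n'₁/N', …, n'_k/N') ∈ Θ. Let M be a nonempty set of Borel probability measures on Θ and let L : Θ → ℝ be a nonnegative bounded measurable likelihood that is continuous on some neighborhood of f' (relative to Θ) and satisfies L(f') > 0. If the prior upper predictive probability is vacuous, i.e. sup_{μ∈M} ∫_Θ g dμ = ∏_{i=1}^k (n'_i/N')^{n'_i}, then the posterior upper predictive probability is vacuous too: sup{ (∫_Θ g·L dμ)/(∫_Θ L dμ) : μ ∈ M, ∫_Θ L dμ > 0 } = ∏_{i=1}^k (n'_i/N')^{n'_i}. -/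
open MeasureTheory Filter Topology Finset

/-! By weighted AM–GM, `g θ = ∏ θᵢ ^ n'ᵢ` is at most `c = ∏ (n'ᵢ / N') ^ n'ᵢ` on the simplex, with
equality only at `f'`; by compactness, `g ≤ c - δ` off any neighbourhood of `f'`, in particular
wherever `L ≤ L f' / 2`. Hence a prior with `∫ g dμ` close to `c` keeps `∫ L dμ ≥ L f' / 4`, and
since `0 ≤ c - g` and `L ≤ C`, its posterior mean of `g` is at least
`c - C (c - ∫ g dμ) / ∫ L dμ`, which tends to `c`. -/

lemma Real.rpow_self_pos {x : ℝ} (hx : 0 ≤ x) : 0 < x ^ x := by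
  rcases hx.eq_or_lt with h | h
  · simp [← h]
  · exact Real.rpow_pos_of_pos h x

section Simplex

variable {ι : Type*} [Fintype ι] {w θ : ι → ℝ}

lemma prod_rpow_eq_prod_div_rpow_mul_prod_rpow_self (hw : ∀ i, 0 ≤ w i) (hθ : ∀ i, 0 ≤ θ i) :
    ∏ i, θ i ^ w i = (∏ i, (θ i / w i) ^ w i) * ∏ i, w i ^ w i := by
  rw [← prod_mul_distrib]
  refine prod_congr rfl fun i _ => ?_
  rw [Real.div_rpow (hθ i) (hw i), div_mul_cancel₀ _ (Real.rpow_self_pos (hw i)).ne']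

lemma sum_mul_div_le_one (hθ : θ ∈ stdSimplex ℝ ι) : ∑ i, w i * (θ i / w i) ≤ 1 := by
  refine (sum_le_sum fun i _ => ?_).trans_eq hθ.2
  rcases eq_or_ne (w i) 0 with h | h
  · simpa [h] using hθ.1 i
  · rw [mul_div_cancel₀ _ h]

lemma prod_div_rpow_le_sum_mul_div (hw : w ∈ stdSimplex ℝ ι) (hθ : ∀ i, 0 ≤ θ i) :
    ∏ i, (θ i / w i) ^ w i ≤ ∑ i, w i * (θ i / w i) :=
  Real.geom_mean_le_arith_mean_weighted _ _ _ (fun i _ => hw.1 i) hw.2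
    fun i _ => div_nonneg (hθ i) (hw.1 i)

theorem prod_rpow_le_prod_rpow_self (hw : w ∈ stdSimplex ℝ ι) (hθ : θ ∈ stdSimplex ℝ ι) :
    ∏ i, θ i ^ w i ≤ ∏ i, w i ^ w i := by
  rw [prod_rpow_eq_prod_div_rpow_mul_prod_rpow_self hw.1 hθ.1]
  exact mul_le_of_le_one_left (prod_nonneg fun i _ => (Real.rpow_self_pos (hw.1 i)).le)
    ((prod_div_rpow_le_sum_mul_div hw hθ.1).trans (sum_mul_div_le_one hθ))

theorem eq_of_prod_rpow_eq_prod_rpow_self (hw : w ∈ stdSimplex ℝ ι) (hθ : θ ∈ stdSimplex ℝ ι)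
    (h : ∏ i, θ i ^ w i = ∏ i, w i ^ w i) : θ = w := by
  rw [prod_rpow_eq_prod_div_rpow_mul_prod_rpow_self hw.1 hθ.1,
    mul_eq_right₀ (prod_pos fun i _ => Real.rpow_self_pos (hw.1 i)).ne'] at h
  have hsum : ∑ i, w i * (θ i / w i) = 1 :=
    (sum_mul_div_le_one hθ).antisymm (h ▸ prod_div_rpow_le_sum_mul_div hw hθ.1)
  have hcenter := (Real.geom_mean_eq_arith_mean_weighted_iff_of_nonneg' univ w (fun i => θ i / w i)
    (fun i _ => hw.1 i) hw.2 fun i _ => div_nonneg (hθ.1 i) (hw.1 i)).1 (h.trans hsum.symm)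
  have hle : ∀ i ∈ univ, w i ≤ θ i := by
    intro i hi
    rcases eq_or_ne (w i) 0 with h0 | h0
    · exact h0 ▸ hθ.1 i
    · have := hcenter i hi h0
      rw [hsum, div_eq_one_iff_eq h0] at this
      exact this.ge
  funext i
  exact ((sum_eq_sum_iff_of_le hle).1 (hw.2.trans hθ.2.symm) i (mem_univ i)).symm

theorem prod_rpow_lt_prod_rpow_self (hw : w ∈ stdSimplex ℝ ι) (hθ : θ ∈ stdSimplex ℝ ι)
    (hne : θ ≠ w) : ∏ i, θ i ^ w i < ∏ i, w i ^ w i :=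
  (prod_rpow_le_prod_rpow_self hw hθ).lt_of_ne (mt (eq_of_prod_rpow_eq_prod_rpow_self hw hθ) hne)

end Simplex

section Frequencies

variable {ι : Type*} [Fintype ι] {n : ι → ℕ} {θ : ι → ℝ}

lemma freq_mem_stdSimplex (hn : ∑ i, n i ≠ 0) :
    (fun i => (n i : ℝ) / ((∑ j, n j : ℕ) : ℝ)) ∈ stdSimplex ℝ ι := by
  refine ⟨fun i => by positivity, ?_⟩
  rw [← sum_div, div_eq_one_iff_eq (by exact_mod_cast hn)]
  push_cast; rfl

lemma prod_pow_eq_prod_rpow_freq_pow (hn : ∑ i, n i ≠ 0) (hθ : ∀ i, 0 ≤ θ i) :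
    ∏ i, θ i ^ n i = (∏ i, θ i ^ ((n i : ℝ) / ((∑ j, n j : ℕ) : ℝ))) ^ (∑ j, n j) := by
  rw [← prod_pow]
  refine prod_congr rfl fun i _ => ?_
  rw [← Real.rpow_natCast _ (∑ j, n j), ← Real.rpow_mul (hθ i),
    div_mul_cancel₀ _ (by exact_mod_cast hn), Real.rpow_natCast]

theorem prod_pow_le_prod_freq_pow (hn : ∑ i, n i ≠ 0) (hθ : θ ∈ stdSimplex ℝ ι) :
    ∏ i, θ i ^ n i ≤ ∏ i, ((n i : ℝ) / ((∑ j, n j : ℕ) : ℝ)) ^ n i := by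
  rw [prod_pow_eq_prod_rpow_freq_pow hn hθ.1,
    prod_pow_eq_prod_rpow_freq_pow hn (freq_mem_stdSimplex hn).1]
  exact pow_le_pow_left₀ (prod_nonneg fun i _ => Real.rpow_nonneg (hθ.1 i) _)
    (prod_rpow_le_prod_rpow_self (freq_mem_stdSimplex hn) hθ) _

theorem prod_pow_lt_prod_freq_pow (hn : ∑ i, n i ≠ 0) (hθ : θ ∈ stdSimplex ℝ ι)
    (hne : θ ≠ fun i => (n i : ℝ) / ((∑ j, n j : ℕ) : ℝ)) :
    ∏ i, θ i ^ n i < ∏ i, ((n i : ℝ) / ((∑ j, n j : ℕ) : ℝ)) ^ n i := by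
  rw [prod_pow_eq_prod_rpow_freq_pow hn hθ.1,
    prod_pow_eq_prod_rpow_freq_pow hn (freq_mem_stdSimplex hn).1]
  exact pow_lt_pow_left₀ (prod_rpow_lt_prod_rpow_self (freq_mem_stdSimplex hn) hθ hne)
    (prod_nonneg fun i _ => Real.rpow_nonneg (hθ.1 i) _) hn

end Frequencies

lemma exists_pos_le_sub_of_notMem_nhds {X : Type*} [TopologicalSpace X] [CompactSpace X]
    {g : X → ℝ} {c : ℝ} (hg : Continuous g) {x₀ : X} (hlt : ∀ x ≠ x₀, g x < c) {s : Set X}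
    (hs : s ∈ 𝓝 x₀) :
    ∃ δ > 0, ∀ x ∉ s, g x ≤ c - δ := by
  obtain ⟨δ, hδ, hle⟩ := isOpen_interior.isClosed_compl.isCompact.exists_forall_le'
    (f := fun x => c - g x) (continuous_const.sub hg).continuousOn (a := 0) fun x hx =>
      sub_pos.2 (hlt x fun h => hx (h ▸ mem_interior_iff_mem_nhds.2 hs))
  exact ⟨δ, hδ, fun x hx => by linarith [hle x fun h => hx (interior_subset h)]⟩

section Posterior

variable {X : Type*} [MeasurableSpace X] {μ : Measure X} {g L : X → ℝ} {a c C δ : ℝ}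

lemma integral_mul_le_mul_integral (hL : Integrable L μ)
    (hgL : Integrable (fun x => g x * L x) μ) (hL0 : ∀ x, 0 ≤ L x) (hgc : ∀ x, g x ≤ c) :
    ∫ x, g x * L x ∂μ ≤ c * ∫ x, L x ∂μ := by
  rw [← integral_const_mul]
  exact integral_mono hgL (hL.const_mul c) fun x => mul_le_mul_of_nonneg_right (hgc x) (hL0 x)

lemma mul_integral_sub_le_integral_mul [IsProbabilityMeasure μ] (hg : Integrable g μ)
    (hL : Integrable L μ) (hgL : Integrable (fun x => g x * L x) μ) (hgc : ∀ x, g x ≤ c)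
    (hLC : ∀ x, L x ≤ C) :
    c * ∫ x, L x ∂μ - C * (c - ∫ x, g x ∂μ) ≤ ∫ x, g x * L x ∂μ := by
  have hcg : Integrable (fun x => c - g x) μ := (integrable_const c).sub hg
  have key : ∫ x, c * L x - C * (c - g x) ∂μ ≤ ∫ x, g x * L x ∂μ :=
    integral_mono ((hL.const_mul c).sub (hcg.const_mul C)) hgL
      fun x => by nlinarith [mul_nonneg (sub_nonneg.2 (hgc x)) (sub_nonneg.2 (hLC x))]
  rwa [integral_sub (hL.const_mul c) (hcg.const_mul C),
    integral_const_mul, integral_const_mul, integral_sub (integrable_const c) hg,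
    integral_const, probReal_univ, one_smul] at key

lemma sub_div_mul_sub_integral_le_integral [IsProbabilityMeasure μ] (hg : Integrable g μ)
    (hL : Integrable L μ) (hL0 : ∀ x, 0 ≤ L x) (hgc : ∀ x, g x ≤ c) (ha : 0 ≤ a) (hδ : 0 < δ)
    (hgap : ∀ x, L x ≤ a → g x ≤ c - δ) :
    a - a / δ * (c - ∫ x, g x ∂μ) ≤ ∫ x, L x ∂μ := by
  have hcg : Integrable (fun x => c - g x) μ := (integrable_const c).sub hg
  have key : ∫ x, a - a / δ * (c - g x) ∂μ ≤ ∫ x, L x ∂μ := by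
    refine integral_mono ((integrable_const a).sub (hcg.const_mul _)) hL fun x => ?_
    rcases le_or_gt (L x) a with hLa | hLa
    · have : a ≤ a / δ * (c - g x) := by
        rw [div_mul_eq_mul_div, le_div_iff₀ hδ]
        exact mul_le_mul_of_nonneg_left (by linarith [hgap x hLa]) ha
      linarith [hL0 x]
    · have : 0 ≤ a / δ * (c - g x) := mul_nonneg (div_nonneg ha hδ.le) (sub_nonneg.2 (hgc x))
      linarith
  rwa [integral_sub (integrable_const a) (hcg.const_mul _),
    integral_const_mul, integral_sub (integrable_const c) hg, integral_const, integral_const,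
    probReal_univ, one_smul, one_smul] at key

lemma integral_pos_and_lt_integral_mul_div_integral [IsProbabilityMeasure μ]
    (hg : Integrable g μ) (hL : Integrable L μ) (hgL : Integrable (fun x => g x * L x) μ)
    (hgc : ∀ x, g x ≤ c) (hL0 : ∀ x, 0 ≤ L x) (hLC : ∀ x, L x ≤ C) (hC : 0 < C) (ha : 0 < a)
    (hδ : 0 < δ) (hgap : ∀ x, L x ≤ a → g x ≤ c - δ) {r : ℝ} (hr : r < c)
    (hclose : c - ∫ x, g x ∂μ < δ / 2) (hdefect : c - ∫ x, g x ∂μ < a * (c - r) / (2 * C)) :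
    0 < ∫ x, L x ∂μ ∧ r < (∫ x, g x * L x ∂μ) / ∫ x, L x ∂μ := by
  have hLμ : a / 2 ≤ ∫ x, L x ∂μ := by
    have hmass := sub_div_mul_sub_integral_le_integral (μ := μ) hg hL hL0 hgc ha.le hδ hgap
    have hsmall : a / δ * (c - ∫ x, g x ∂μ) ≤ a / 2 :=
      calc a / δ * (c - ∫ x, g x ∂μ) ≤ a / δ * (δ / 2) :=
            mul_le_mul_of_nonneg_left hclose.le (by positivity)
        _ = a / 2 := by field_simp
    linarith
  have hLμ_pos : 0 < ∫ x, L x ∂μ := by linarith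
  refine ⟨hLμ_pos, (lt_div_iff₀ hLμ_pos).2 ?_⟩
  have hCdefect : C * (c - ∫ x, g x ∂μ) < (c - r) * ∫ x, L x ∂μ :=
    calc C * (c - ∫ x, g x ∂μ) < C * (a * (c - r) / (2 * C)) := mul_lt_mul_of_pos_left hdefect hC
      _ = (c - r) * (a / 2) := by field_simp
      _ ≤ (c - r) * ∫ x, L x ∂μ := mul_le_mul_of_nonneg_left hLμ (sub_pos.2 hr).le
  linarith [mul_integral_sub_le_integral_mul hg hL hgL hgc hLC]

theorem sSup_posterior_mean_eq [TopologicalSpace X] [CompactSpace X] [OpensMeasurableSpace X]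
    {M : Set (Measure X)} (hM : M.Nonempty) (hMprob : ∀ μ ∈ M, IsProbabilityMeasure μ)
    {x₀ : X} (hg : Continuous g) (hgc : ∀ x, g x ≤ c) (hlt : ∀ x ≠ x₀, g x < c)
    (hL0 : ∀ x, 0 ≤ L x) (hLC : ∀ x, L x ≤ C) (hLm : Measurable L) (hLx₀ : ContinuousAt L x₀)
    (hLpos : 0 < L x₀) (hprior : c ≤ sSup {r | ∃ μ ∈ M, r = ∫ x, g x ∂μ}) :
    sSup {r | ∃ μ ∈ M, 0 < ∫ x, L x ∂μ ∧ r = (∫ x, g x * L x ∂μ) / ∫ x, L x ∂μ} = c := by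
  set a := L x₀ / 2
  have ha : 0 < a := half_pos hLpos
  have hC : 0 < C := hLpos.trans_le (hLC x₀)
  obtain ⟨δ, hδ, hgap⟩ := exists_pos_le_sub_of_notMem_nhds hg hlt
    (hLx₀.eventually (lt_mem_nhds (half_lt_self hLpos)))
  have hLbound : ∀ x, ‖L x‖ ≤ C := fun x => (Real.norm_of_nonneg (hL0 x)).trans_le (hLC x)
  have hint : ∀ μ ∈ M, Integrable g μ ∧ Integrable L μ ∧ Integrable (fun x => g x * L x) μ := by
    intro μ hμ
    have := hMprob μ hμ
    have hgμ := hg.integrable_of_hasCompactSupport (μ := μ) (.of_compactSpace g)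
    exact ⟨hgμ, .of_bound hLm.aestronglyMeasurable C (ae_of_all _ hLbound),
      hgμ.mul_bdd hLm.aestronglyMeasurable (ae_of_all _ hLbound)⟩
  have hlb : ∀ r < c, ∃ q ∈ {r | ∃ μ ∈ M, 0 < ∫ x, L x ∂μ ∧
      r = (∫ x, g x * L x ∂μ) / ∫ x, L x ∂μ}, r < q := by
    intro r hr
    set ε := min (δ / 2) (a * (c - r) / (2 * C))
    have hε : 0 < ε := lt_min (half_pos hδ) (by have := sub_pos.2 hr; positivity)
    obtain ⟨μ₀, hμ₀⟩ := hM
    obtain ⟨_, ⟨μ, hμ, rfl⟩, hμg⟩ :=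
      exists_lt_of_lt_csSup (by exact ⟨_, μ₀, hμ₀, rfl⟩) ((sub_lt_self c hε).trans_le hprior)
    have := hMprob μ hμ
    obtain ⟨hgμ, hLμ, hgLμ⟩ := hint μ hμ
    obtain ⟨hclose, hdefect⟩ := lt_min_iff.1 (show c - ∫ x, g x ∂μ < ε by linarith)
    obtain ⟨hLμ_pos, hlt⟩ := integral_pos_and_lt_integral_mul_div_integral hgμ hLμ hgLμ hgc hL0
      hLC hC ha hδ (fun x hx => hgap x (not_lt.2 hx)) hr hclose hdefect
    exact ⟨_, ⟨μ, hμ, hLμ_pos, rfl⟩, hlt⟩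
  refine csSup_eq_of_forall_le_of_forall_lt_exists_gt ?_ ?_ hlb
  · obtain ⟨q, hq, -⟩ := hlb (c - 1) (sub_lt_self c one_pos)
    exact ⟨q, hq⟩
  · rintro _ ⟨μ, hμ, hLμ_pos, rfl⟩
    obtain ⟨-, hLμ, hgLμ⟩ := hint μ hμ
    exact (div_le_iff₀ hLμ_pos).2 (integral_mul_le_mul_integral hLμ hgLμ hL0 hgc)

end Posterior

/-- **Corollary 1.**
Let `Θ` be the standard simplex in `ℝ^k`, `n'₁, …, n'_k` nonnegative integers with
`N' = Σᵢ n'ᵢ > 0`, `g θ = ∏ᵢ θᵢ ^ n'ᵢ`, and `f' = (n'₁/N', …, n'_k/N') ∈ Θ`.  Let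
`M` be a nonempty set of Borel probability measures on `Θ` and `L : Θ → ℝ` a
nonnegative bounded measurable likelihood, continuous on some neighborhood of `f'`
(relative to `Θ`) with `L f' > 0`.  If the prior upper predictive probability is
vacuous, `sup_{μ∈M} ∫ g dμ = ∏ᵢ (n'ᵢ/N') ^ n'ᵢ`, then so is the posterior one:
`sup { (∫ g·L dμ)/(∫ L dμ) | μ ∈ M, ∫ L dμ > 0 } = ∏ᵢ (n'ᵢ/N') ^ n'ᵢ`. -/
theorem vacuous_posterior_upper_predictive
    (k : ℕ) (n' : Fin k → ℕ) (hN' : 0 < ∑ i, n' i)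
    (hf' : (fun i => (n' i : ℝ) / ((∑ j, n' j : ℕ) : ℝ)) ∈ stdSimplex ℝ (Fin k))
    (M : Set (Measure (stdSimplex ℝ (Fin k))))
    (hM : M.Nonempty)
    (hMprob : ∀ μ ∈ M, IsProbabilityMeasure μ)
    (L : stdSimplex ℝ (Fin k) → ℝ)
    (hL_nonneg : ∀ θ, 0 ≤ L θ)
    (hL_bdd : ∃ C, ∀ θ, L θ ≤ C)
    (hL_meas : Measurable L)
    (hL_cont : ∃ U ∈ 𝓝 (⟨_, hf'⟩ : stdSimplex ℝ (Fin k)), ContinuousOn L U)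
    (hL_pos : 0 < L ⟨_, hf'⟩)
    (hprior : sSup {r | ∃ μ ∈ M, r = ∫ θ, ∏ i, (θ : Fin k → ℝ) i ^ n' i ∂μ}
        = ∏ i, ((n' i : ℝ) / ((∑ j, n' j : ℕ) : ℝ)) ^ n' i) :
    sSup {r | ∃ μ ∈ M, 0 < ∫ θ, L θ ∂μ ∧
        r = (∫ θ, (∏ i, (θ : Fin k → ℝ) i ^ n' i) * L θ ∂μ) / (∫ θ, L θ ∂μ)}
      = ∏ i, ((n' i : ℝ) / ((∑ j, n' j : ℕ) : ℝ)) ^ n' i := by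
  obtain ⟨C, hC⟩ := hL_bdd
  obtain ⟨U, hU, hLU⟩ := hL_cont
  exact sSup_posterior_mean_eq (g := fun θ : stdSimplex ℝ (Fin k) => ∏ i, (θ : Fin k → ℝ) i ^ n' i)
    hM hMprob
    (continuous_finsetProd _ fun i _ => ((continuous_apply i).comp continuous_subtype_val).pow _)
    (fun θ => prod_pow_le_prod_freq_pow hN'.ne' θ.2)
    (fun θ hθ => prod_pow_lt_prod_freq_pow hN'.ne' θ.2 (Subtype.coe_injective.ne hθ))
    hL_nonneg hC hL_meas (hLU.continuousAt hU) hL_pos hprior.ge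
end

section
/- Let Θ be the standard simplex in ℝ^k, fix an index i and an integer N' ≥ 1, and let e^i ∈ Θ be the vertex with i-th coordinate 1. Let M be a nonempty set of Borel probability measures on Θ with sup_{μ∈M} ∫_Θ θ_i dμ = 1, and let L : Θ → ℝ be a nonnegative bounded measurable likelihood with L(e^i) > 0 that is continuous on some neighborhood of e^i (relative to Θ). Then the posterior upper probability of the length-N' dataset d^i consisting of N' copies of outcome x_i is vacuous: sup{ (∫_Θ θ_i^{N'}·L dμ)/(∫_Θ L dμ) : μ ∈ M, ∫_Θ L dμ > 0 } = 1; and consequently, for every frequency vector (n'₁,…,n'_k) of nonnegative integers with Σ_j n'_j = N' and n'_i < N', the posterior lower probability is vacuous: inf{ (∫_Θ ∏_j θ_j^{n'_j}·L dμ)/(∫_Θ L dμ) : μ ∈ M, ∫_Θ L dμ > 0 } = 0. -/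
/-!
Continuity of `L` at the vertex `e^i`, together with `L ≥ 0` and `dist θ e^i ≤ 1 - θ i`, gives an
affine minorant `c - K (1 - θ i) ≤ L θ` with `c > 0`. Hence if the prior mean of `θ i` is `1 - m`,
the evidence `∫ L dμ` is at least `c - K m`. The numerators to be controlled,
`∫ (1 - θ i ^ N') L dμ` for the upper probability and `∫ (∏ θ j ^ n' j) L dμ` for the lower one,
are at most `C N' m` and `C m`: by Bernoulli `1 - x ^ N' ≤ N' (1 - x)`, and if `n' j ≠ 0` for
some `j ≠ i` the product is at most `θ j ≤ 1 - θ i`. Priors in `M` with `m → 0` make both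
posterior ratios arbitrarily small.
-/

open MeasureTheory Filter Topology

lemma one_sub_pow_le_mul_one_sub {x : ℝ} (hx : -1 ≤ x) (n : ℕ) : 1 - x ^ n ≤ n * (1 - x) := by
  have := one_add_mul_le_pow (a := x - 1) (by linarith) n
  rw [add_sub_cancel] at this
  linarith

lemma Fintype.exists_ne_apply_ne_zero_of_apply_lt_sum {ι : Type*} [Fintype ι] {n : ι → ℕ} {i : ι}
    (h : n i < ∑ j, n j) : ∃ j ≠ i, n j ≠ 0 := by
  by_contra! h0
  rw [Finset.sum_eq_single i (fun j _ hji => h0 j hji) (by simp)] at h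
  exact lt_irrefl _ h

lemma exists_mem_pos_div_lt {α : Type*} {M : Set α} {m D E : α → ℝ} {c K A : ℝ}
    (hc : 0 < c) (hK : 0 ≤ K) (hA : 0 ≤ A) (hm : ∀ β > 0, ∃ x ∈ M, m x < β)
    (hD : ∀ x ∈ M, c - K * m x ≤ D x) (hE : ∀ x ∈ M, E x ≤ A * m x) :
    ∀ ε > 0, ∃ x ∈ M, 0 < D x ∧ E x / D x < ε := by
  intro ε hε
  obtain ⟨β, hβ, hAβ⟩ := exists_pos_mul_lt (half_pos (mul_pos hε hc)) A
  obtain ⟨γ, hγ, hKγ⟩ := exists_pos_mul_lt (half_pos hc) K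
  obtain ⟨x, hxM, hx⟩ := hm (min β γ) (lt_min hβ hγ)
  have hKm : K * m x ≤ K * γ := mul_le_mul_of_nonneg_left (hx.le.trans (min_le_right _ _)) hK
  have hAm : A * m x ≤ A * β := mul_le_mul_of_nonneg_left (hx.le.trans (min_le_left _ _)) hA
  have hDx : c / 2 < D x := by linarith [hD x hxM]
  refine ⟨x, hxM, by linarith, (div_lt_iff₀ (by linarith)).2 ?_⟩
  nlinarith [hE x hxM]

lemma exists_mem_one_sub_lt_of_sSup_eq_one {α : Type*} {M : Set α} {g : α → ℝ}
    (h : sSup {r | ∃ x ∈ M, r = g x} = 1) : ∀ β > 0, ∃ x ∈ M, 1 - g x < β := by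
  intro β hβ
  have hne : {r | ∃ x ∈ M, r = g x}.Nonempty := by
    by_contra hempty
    rw [Set.not_nonempty_iff_eq_empty.1 hempty, Real.sSup_empty] at h
    exact zero_ne_one h
  obtain ⟨_, ⟨x, hxM, rfl⟩, hx⟩ := exists_lt_of_lt_csSup hne (h ▸ sub_lt_self 1 hβ)
  exact ⟨x, hxM, by linarith⟩

lemma ContinuousAt.exists_sub_mul_le {X : Type*} [PseudoMetricSpace X] {L t : X → ℝ} {e : X}
    (hcont : ContinuousAt L e) (hpos : 0 < L e) (hL0 : ∀ x, 0 ≤ L x) (ht : ∀ x, dist x e ≤ t x) :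
    ∃ c > 0, ∃ K ≥ 0, ∀ x, c - K * t x ≤ L x := by
  obtain ⟨δ, hδ, hball⟩ := Metric.eventually_nhds_iff.1
    (hcont.eventually (lt_mem_nhds (half_lt_self hpos)))
  refine ⟨L e / 2, half_pos hpos, L e / 2 / δ, by positivity, fun x => ?_⟩
  by_cases hx : dist x e < δ
  · have : 0 ≤ L e / 2 / δ * t x := by
      have ht0 : 0 ≤ t x := dist_nonneg.trans (ht x)
      positivity
    linarith [hball hx]
  · have : L e / 2 ≤ L e / 2 / δ * t x := by
      rw [div_mul_comm, le_mul_iff_one_le_left (half_pos hpos), one_le_div hδ]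
      exact (not_lt.1 hx).trans (ht x)
    linarith [hL0 x]

namespace stdSimplex

variable {ι : Type*} [Fintype ι]

lemma apply_le_one_sub_apply (θ : stdSimplex ℝ ι) {i j : ι} (hji : j ≠ i) : θ j ≤ 1 - θ i := by
  classical
  have := Finset.sum_le_sum_of_subset_of_nonneg (Finset.subset_univ {j, i})
    fun l _ _ => zero_le θ l
  rw [Finset.sum_pair hji, sum_eq_one θ] at this
  linarith

lemma prod_pow_le_one_sub_apply (θ : stdSimplex ℝ ι) {n : ι → ℕ} {i j : ι} (hji : j ≠ i)
    (hj : n j ≠ 0) : ∏ l, θ l ^ n l ≤ 1 - θ i := by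
  classical
  calc ∏ l, θ l ^ n l = θ j ^ n j * ∏ l ∈ Finset.univ.erase j, θ l ^ n l :=
        (Finset.mul_prod_erase _ _ (Finset.mem_univ j)).symm
    _ ≤ θ j ^ n j := mul_le_of_le_one_right (pow_nonneg (zero_le θ j) _)
        (Finset.prod_le_one (fun l _ => pow_nonneg (zero_le θ l) _)
          fun l _ => pow_le_one₀ (zero_le θ l) (le_one θ l))
    _ ≤ θ j := pow_le_of_le_one (zero_le θ j) (le_one θ j) hj
    _ ≤ 1 - θ i := apply_le_one_sub_apply θ hji

lemma dist_vertex_le [DecidableEq ι] (θ : stdSimplex ℝ ι) (i : ι) :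
    dist θ (vertex i) ≤ 1 - θ i := by
  rw [Subtype.dist_eq]
  refine (dist_pi_le_iff (sub_nonneg.2 (le_one θ i))).2 fun j => ?_
  change dist (θ j) ((Pi.single i 1 : ι → ℝ) j) ≤ 1 - θ i
  rcases eq_or_ne j i with rfl | hji
  · rw [Pi.single_eq_same, Real.dist_eq, abs_of_nonpos (sub_nonpos.2 (le_one θ j)),
      neg_sub]
  · rw [Pi.single_eq_of_ne hji, Real.dist_eq, sub_zero, abs_of_nonneg (zero_le θ j)]
    exact apply_le_one_sub_apply θ hji

lemma measurable_apply (i : ι) : Measurable fun θ : stdSimplex ℝ ι => θ i :=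
  (measurable_pi_apply i).comp measurable_subtype_coe

variable {μ : Measure (stdSimplex ℝ ι)} [IsProbabilityMeasure μ]

lemma integrable_apply (i : ι) : Integrable (fun θ : stdSimplex ℝ ι => θ i) μ :=
  Integrable.of_mem_Icc 0 1 (measurable_apply i).aemeasurable
    (ae_of_all _ fun θ => ⟨zero_le θ i, le_one θ i⟩)

lemma integral_const_mul_one_sub_apply (a : ℝ) (i : ι) :
    ∫ θ, a * (1 - θ i) ∂μ = a * (1 - ∫ θ, θ i ∂μ) := by
  rw [integral_const_mul, integral_sub (integrable_const 1) (integrable_apply i)]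
  simp

lemma integral_le_mul_one_sub_integral {f : stdSimplex ℝ ι → ℝ} {A : ℝ} {i : ι}
    (hf0 : ∀ θ, 0 ≤ f θ) (hfA : ∀ θ, f θ ≤ A * (1 - θ i)) :
    ∫ θ, f θ ∂μ ≤ A * (1 - ∫ θ, θ i ∂μ) := by
  rw [← integral_const_mul_one_sub_apply]
  exact integral_mono_of_nonneg (ae_of_all _ hf0)
    (((integrable_const 1).sub (integrable_apply i)).const_mul A) (ae_of_all _ hfA)

lemma sub_mul_one_sub_integral_le {L : stdSimplex ℝ ι → ℝ} {c K : ℝ} {i : ι}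
    (hL : Integrable L μ) (hcK : ∀ θ, c - K * (1 - θ i) ≤ L θ) :
    c - K * (1 - ∫ θ, θ i ∂μ) ≤ ∫ θ, L θ ∂μ := by
  have hint : Integrable (fun θ : stdSimplex ℝ ι => K * (1 - θ i)) μ :=
    ((integrable_const 1).sub (integrable_apply i)).const_mul K
  calc c - K * (1 - ∫ θ, θ i ∂μ) = ∫ θ, (c - K * (1 - θ i)) ∂μ := by
        rw [integral_sub (integrable_const c) hint, integral_const_mul_one_sub_apply]
        simp
    _ ≤ ∫ θ, L θ ∂μ := integral_mono ((integrable_const c).sub hint) hL hcK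

end stdSimplex

section Posterior

variable {X : Type*} [MeasurableSpace X] {M : Set (Measure X)} {L g : X → ℝ}

theorem sInf_posterior_eq_zero (hL0 : ∀ θ, 0 ≤ L θ) (hg0 : ∀ θ, 0 ≤ g θ)
    (hsmall : ∀ ε > 0, ∃ μ ∈ M, 0 < ∫ θ, L θ ∂μ ∧ (∫ θ, g θ * L θ ∂μ) / ∫ θ, L θ ∂μ < ε) :
    sInf {r | ∃ μ ∈ M, 0 < ∫ θ, L θ ∂μ ∧ r = (∫ θ, g θ * L θ ∂μ) / ∫ θ, L θ ∂μ} = 0 := by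
  obtain ⟨μ, hμ, hpos, -⟩ := hsmall 1 one_pos
  refine csInf_eq_of_forall_ge_of_forall_gt_exists_lt ⟨_, μ, hμ, hpos, rfl⟩ ?_ fun w hw => ?_
  · rintro _ ⟨μ, -, hpos, rfl⟩
    exact div_nonneg (integral_nonneg fun θ => mul_nonneg (hg0 θ) (hL0 θ)) hpos.le
  · obtain ⟨μ, hμ, hpos, hlt⟩ := hsmall w hw
    exact ⟨_, ⟨μ, hμ, hpos, rfl⟩, hlt⟩

theorem sSup_posterior_eq_one (hL0 : ∀ θ, 0 ≤ L θ) (hLint : ∀ μ ∈ M, Integrable L μ)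
    (hg : Measurable g) (hg0 : ∀ θ, 0 ≤ g θ) (hg1 : ∀ θ, g θ ≤ 1)
    (hsmall : ∀ ε > 0, ∃ μ ∈ M, 0 < ∫ θ, L θ ∂μ ∧
      (∫ θ, (1 - g θ) * L θ ∂μ) / ∫ θ, L θ ∂μ < ε) :
    sSup {r | ∃ μ ∈ M, 0 < ∫ θ, L θ ∂μ ∧ r = (∫ θ, g θ * L θ ∂μ) / ∫ θ, L θ ∂μ} = 1 := by
  have hratio : ∀ μ ∈ M, 0 < ∫ θ, L θ ∂μ → (∫ θ, g θ * L θ ∂μ) / ∫ θ, L θ ∂μ =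
      1 - (∫ θ, (1 - g θ) * L θ ∂μ) / ∫ θ, L θ ∂μ := by
    intro μ hμ hpos
    have hgL : Integrable (fun θ => g θ * L θ) μ :=
      (hLint μ hμ).bdd_mul hg.aestronglyMeasurable (ae_of_all _ fun θ => by
        rw [Real.norm_eq_abs, abs_of_nonneg (hg0 θ)]
        exact hg1 θ)
    simp_rw [sub_mul, one_mul]
    rw [integral_sub (hLint μ hμ) hgL]
    field_simp
    ring
  obtain ⟨μ, hμ, hpos, -⟩ := hsmall 1 one_pos
  refine csSup_eq_of_forall_le_of_forall_lt_exists_gt ⟨_, μ, hμ, hpos, rfl⟩ ?_ fun w hw => ?_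
  · rintro _ ⟨μ, hμ, hpos, rfl⟩
    refine div_le_one_of_le₀ (integral_mono_of_nonneg ?_ (hLint μ hμ) ?_) hpos.le
    · exact ae_of_all _ fun θ => mul_nonneg (hg0 θ) (hL0 θ)
    · exact ae_of_all _ fun θ => mul_le_of_le_one_left (hL0 θ) (hg1 θ)
  · obtain ⟨μ, hμ, hpos, hlt⟩ := hsmall (1 - w) (sub_pos.2 hw)
    exact ⟨_, ⟨μ, hμ, hpos, rfl⟩, by rw [hratio μ hμ hpos]; linarith⟩

end Posterior

theorem exists_mem_posterior_lt {ι : Type*} [Fintype ι] [DecidableEq ι] {i : ι}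
    {M : Set (Measure (stdSimplex ℝ ι))} {L : stdSimplex ℝ ι → ℝ} {C : ℝ}
    (hMprob : ∀ μ ∈ M, IsProbabilityMeasure μ) (hLint : ∀ μ ∈ M, Integrable L μ)
    (hL0 : ∀ θ, 0 ≤ L θ) (hLC : ∀ θ, L θ ≤ C)
    (hcont : ContinuousAt L (stdSimplex.vertex i)) (hpos : 0 < L (stdSimplex.vertex i))
    (hprior : ∀ β > 0, ∃ μ ∈ M, 1 - ∫ θ, θ i ∂μ < β)
    (f : stdSimplex ℝ ι → ℝ) (B : ℝ) (hB : 0 ≤ B) (hf0 : ∀ θ, 0 ≤ f θ)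
    (hfB : ∀ θ, f θ ≤ B * (1 - θ i)) :
    ∀ ε > 0, ∃ μ ∈ M, 0 < ∫ θ, L θ ∂μ ∧ (∫ θ, f θ * L θ ∂μ) / ∫ θ, L θ ∂μ < ε := by
  have hC : 0 ≤ C := (hL0 _).trans (hLC (stdSimplex.vertex i))
  obtain ⟨c, hc, K, hK, hcK⟩ :=
    hcont.exists_sub_mul_le hpos hL0 (stdSimplex.dist_vertex_le · i)
  refine exists_mem_pos_div_lt hc hK (mul_nonneg hB hC) hprior (fun μ hμ => ?_) fun μ hμ => ?_
  · have := hMprob μ hμ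
    exact stdSimplex.sub_mul_one_sub_integral_le (hLint μ hμ) hcK
  · have := hMprob μ hμ
    refine stdSimplex.integral_le_mul_one_sub_integral
      (fun θ => mul_nonneg (hf0 θ) (hL0 θ)) fun θ => ?_
    calc f θ * L θ ≤ B * (1 - θ i) * C :=
          mul_le_mul (hfB θ) (hLC θ) (hL0 θ) (mul_nonneg hB (sub_nonneg.2 (stdSimplex.le_one θ i)))
      _ = B * C * (1 - θ i) := by ring

theorem vacuous_posterior_dataset_probability_general
    (k : ℕ) (i : Fin k) (N' : ℕ)
    (hei : (fun j => if j = i then (1 : ℝ) else 0) ∈ stdSimplex ℝ (Fin k))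
    (M : Set (Measure (stdSimplex ℝ (Fin k))))
    (hMprob : ∀ μ ∈ M, IsProbabilityMeasure μ)
    (L : stdSimplex ℝ (Fin k) → ℝ)
    (hL_nonneg : ∀ θ, 0 ≤ L θ)
    (hL_bdd : ∃ C, ∀ θ, L θ ≤ C)
    (hL_meas : Measurable L)
    (hL_cont : ∃ U ∈ 𝓝 (⟨_, hei⟩ : stdSimplex ℝ (Fin k)), ContinuousOn L U)
    (hL_pos : 0 < L ⟨_, hei⟩)
    (hprior : sSup {r | ∃ μ ∈ M, r = ∫ θ, (θ : Fin k → ℝ) i ∂μ} = 1) :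
    sSup {r | ∃ μ ∈ M, 0 < ∫ θ, L θ ∂μ ∧
        r = (∫ θ, (θ : Fin k → ℝ) i ^ N' * L θ ∂μ) / (∫ θ, L θ ∂μ)} = 1 ∧
    ∀ n' : Fin k → ℕ, (∑ j, n' j) = N' → n' i < N' →
      sInf {r | ∃ μ ∈ M, 0 < ∫ θ, L θ ∂μ ∧
          r = (∫ θ, (∏ j, (θ : Fin k → ℝ) j ^ n' j) * L θ ∂μ) / (∫ θ, L θ ∂μ)} = 0 := by
  obtain ⟨C, hLC⟩ := hL_bdd
  obtain ⟨U, hU, hLU⟩ := hL_cont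
  have hvertex : (⟨_, hei⟩ : stdSimplex ℝ (Fin k)) = stdSimplex.vertex i :=
    Subtype.ext (funext fun j => (Pi.single_apply i 1 j).symm)
  rw [hvertex] at hU hL_pos
  have hLint : ∀ μ ∈ M, Integrable L μ := fun μ hμ =>
    have := hMprob μ hμ
    Integrable.of_mem_Icc 0 C hL_meas.aemeasurable (ae_of_all _ fun θ => ⟨hL_nonneg θ, hLC θ⟩)
  have hsmall := exists_mem_posterior_lt hMprob hLint hL_nonneg hLC (hLU.continuousAt hU) hL_pos
    (exists_mem_one_sub_lt_of_sSup_eq_one hprior)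
  have hθ0 : ∀ (θ : stdSimplex ℝ (Fin k)) j, 0 ≤ θ j := stdSimplex.zero_le
  have hθ1 : ∀ (θ : stdSimplex ℝ (Fin k)) j, θ j ≤ 1 := stdSimplex.le_one
  constructor
  · refine sSup_posterior_eq_one hL_nonneg hLint ((stdSimplex.measurable_apply i).pow_const N')
      (fun θ => pow_nonneg (hθ0 θ i) N') (fun θ => pow_le_one₀ (hθ0 θ i) (hθ1 θ i))
      (hsmall _ N' N'.cast_nonneg (fun θ => sub_nonneg.2 (pow_le_one₀ (hθ0 θ i) (hθ1 θ i)))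
        fun θ => ?_)
    exact one_sub_pow_le_mul_one_sub (by linarith [hθ0 θ i]) N'
  · intro n' hsum hlt
    obtain ⟨j, hji, hj⟩ := Fintype.exists_ne_apply_ne_zero_of_apply_lt_sum (hsum ▸ hlt)
    have hprod0 : ∀ θ : stdSimplex ℝ (Fin k), 0 ≤ ∏ l, θ l ^ n' l :=
      fun θ => Finset.prod_nonneg fun l _ => pow_nonneg (hθ0 θ l) _
    refine sInf_posterior_eq_zero hL_nonneg hprod0 (hsmall _ 1 zero_le_one hprod0 fun θ => ?_)
    rw [one_mul]
    exact stdSimplex.prod_pow_le_one_sub_apply θ hji hj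

/-- **Corollary 4.**
Let `Θ` be the standard simplex in `ℝ^k`, `i` a fixed index, `N' ≥ 1` an integer,
and `e^i ∈ Θ` the vertex with `i`-th coordinate `1`.  Let `M` be a nonempty set of
Borel probability measures on `Θ` with `sup_{μ∈M} ∫ θᵢ dμ = 1`, and let `L : Θ → ℝ`
be a nonnegative bounded measurable likelihood with `L e^i > 0`, continuous on some
neighborhood of `e^i` (relative to `Θ`).  Then the posterior upper probability of
the dataset `d^i` of `N'` copies of outcome `i` is vacuous,
`sup { (∫ θᵢ^{N'}·L dμ)/(∫ L dμ) | μ ∈ M, ∫ L dμ > 0 } = 1`, and consequently, for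
every frequency vector `(n'₁,…,n'_k)` with `Σⱼ n'ⱼ = N'` and `n'ᵢ < N'`, the
posterior lower probability is vacuous:
`inf { (∫ ∏ⱼ θⱼ^{n'ⱼ}·L dμ)/(∫ L dμ) | μ ∈ M, ∫ L dμ > 0 } = 0`. -/
theorem vacuous_posterior_dataset_probability
    (k : ℕ) (i : Fin k) (N' : ℕ) (hN' : 1 ≤ N')
    (hei : (fun j => if j = i then (1 : ℝ) else 0) ∈ stdSimplex ℝ (Fin k))
    (M : Set (Measure (stdSimplex ℝ (Fin k))))
    (hM : M.Nonempty)
    (hMprob : ∀ μ ∈ M, IsProbabilityMeasure μ)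
    (L : stdSimplex ℝ (Fin k) → ℝ)
    (hL_nonneg : ∀ θ, 0 ≤ L θ)
    (hL_bdd : ∃ C, ∀ θ, L θ ≤ C)
    (hL_meas : Measurable L)
    (hL_cont : ∃ U ∈ 𝓝 (⟨_, hei⟩ : stdSimplex ℝ (Fin k)), ContinuousOn L U)
    (hL_pos : 0 < L ⟨_, hei⟩)
    (hprior : sSup {r | ∃ μ ∈ M, r = ∫ θ, (θ : Fin k → ℝ) i ∂μ} = 1) :
    sSup {r | ∃ μ ∈ M, 0 < ∫ θ, L θ ∂μ ∧
        r = (∫ θ, (θ : Fin k → ℝ) i ^ N' * L θ ∂μ) / (∫ θ, L θ ∂μ)} = 1 ∧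
    ∀ n' : Fin k → ℕ, (∑ j, n' j) = N' → n' i < N' →
      sInf {r | ∃ μ ∈ M, 0 < ∫ θ, L θ ∂μ ∧
          r = (∫ θ, (∏ j, (θ : Fin k → ℝ) j ^ n' j) * L θ ∂μ) / (∫ θ, L θ ∂μ)} = 0 :=
  vacuous_posterior_dataset_probability_general k i N' hei M hMprob L hL_nonneg hL_bdd hL_meas
    hL_cont hL_pos hprior
end

section
/- Fix ε₁, ε₂ ∈ (0,1), integers N ≥ 1 and 0 ≤ n ≤ N, and define the diagnostic-test likelihood L : [0,1] → ℝ by L(θ) = ((1−ε₂)θ + ε₁(1−θ))^n · (ε₂θ + (1−ε₁)(1−θ))^{N−n}. Then L is continuous and strictly positive on [0,1]. Consequently, for any nonempty set M of Borel probability measures on [0,1] and any nonnegative integers n'₁, n'₂ with N' = n'₁ + n'₂ > 0: if inf_{μ∈M} ∫ θ^{n'₁}(1−θ)^{n'₂} dμ(θ) = 0 and sup_{μ∈M} ∫ θ^{n'₁}(1−θ)^{n'₂} dμ(θ) = (n'₁/N')^{n'₁}(n'₂/N')^{n'₂}, then also inf_{μ∈M} (∫ θ^{n'₁}(1−θ)^{n'₂}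 L(θ) dμ)/(∫ L dμ) = 0 and sup_{μ∈M} (∫ θ^{n'₁}(1−θ)^{n'₂} L(θ) dμ)/(∫ L dμ) = (n'₁/N')^{n'₁}(n'₂/N')^{n'₂}. -/
open MeasureTheory Filter Topology

/-!
Since `L` is continuous and positive on the compact interval `[0,1]`, it satisfies `c ≤ L ≤ C`
for some `0 < c ≤ C`, so under every prior `μ` the posterior mean of a nonnegative `g` is at most
`C / c` times its prior mean. Applied to `g = θ^{n'₁}(1-θ)^{n'₂}` this carries a vanishing lower
prior bound over to the posterior; applied to `B - g`, where `B` is the maximum of `g` on `[0,1]`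
(weighted AM–GM), it carries the upper bound `B` over as well.
-/

lemma mul_add_mul_one_sub_pos {a b θ : ℝ} (ha : 0 < a) (hb : 0 < b)
    (hθ : θ ∈ Set.Icc (0 : ℝ) 1) : 0 < a * θ + b * (1 - θ) := by
  nlinarith [mul_le_mul_of_nonneg_right (min_le_left a b) hθ.1,
    mul_le_mul_of_nonneg_right (min_le_right a b) (sub_nonneg.2 hθ.2), lt_min ha hb]

lemma pow_mul_one_sub_pow_le_of_pos {a b : ℕ} (ha : 0 < a) (hb : 0 < b) {θ : ℝ}
    (hθ : θ ∈ Set.Icc (0 : ℝ) 1) :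
    θ ^ a * (1 - θ) ^ b ≤
      ((a : ℝ) / ((a + b : ℕ) : ℝ)) ^ a * ((b : ℝ) / ((a + b : ℕ) : ℝ)) ^ b := by
  set wa : ℝ := a / ((a + b : ℕ) : ℝ)
  set wb : ℝ := b / ((a + b : ℕ) : ℝ)
  have hwa : 0 < wa := by positivity
  have hwb : 0 < wb := by positivity
  have hw : wa + wb = 1 := by
    rw [← add_div, div_eq_one_iff_eq (by positivity)]; push_cast; rfl
  have hp : 0 ≤ θ / wa := div_nonneg hθ.1 hwa.le
  have hq : 0 ≤ (1 - θ) / wb := div_nonneg (sub_nonneg.2 hθ.2) hwb.le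
  -- weighted AM–GM at points whose weighted mean is `θ + (1 - θ) = 1`
  have amgm : (θ / wa) ^ wa * ((1 - θ) / wb) ^ wb ≤ 1 := by
    have := Real.geom_mean_le_arith_mean2_weighted hwa.le hwb.le hp hq hw
    rwa [mul_div_cancel₀ _ hwa.ne', mul_div_cancel₀ _ hwb.ne', add_sub_cancel] at this
  have amgm_pow : (θ / wa) ^ a * ((1 - θ) / wb) ^ b ≤ 1 := by
    have hrpow : (θ / wa) ^ a * ((1 - θ) / wb) ^ b =
        ((θ / wa) ^ wa * ((1 - θ) / wb) ^ wb) ^ (a + b) := by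
      rw [mul_pow, ← Real.rpow_mul_natCast hp, ← Real.rpow_mul_natCast hq,
        div_mul_cancel₀ _ (by positivity), div_mul_cancel₀ _ (by positivity),
        Real.rpow_natCast, Real.rpow_natCast]
    rw [hrpow]
    exact pow_le_one₀ (by positivity) amgm
  clear_value wa wb
  rwa [div_pow, div_pow, div_mul_div_comm, div_le_one (by positivity)] at amgm_pow

lemma pow_mul_one_sub_pow_le {a b : ℕ} (hab : 0 < a + b) {θ : ℝ}
    (hθ : θ ∈ Set.Icc (0 : ℝ) 1) :
    θ ^ a * (1 - θ) ^ b ≤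
      ((a : ℝ) / ((a + b : ℕ) : ℝ)) ^ a * ((b : ℝ) / ((a + b : ℕ) : ℝ)) ^ b := by
  rcases Nat.eq_zero_or_pos a with rfl | ha
  · have hb : (b : ℝ) ≠ 0 := Nat.cast_ne_zero.2 (by omega)
    simpa [hb] using pow_le_one₀ (sub_nonneg.2 hθ.2) (sub_le_self 1 hθ.1)
  rcases Nat.eq_zero_or_pos b with rfl | hb
  · have ha : (a : ℝ) ≠ 0 := Nat.cast_ne_zero.2 (by omega)
    simpa [ha] using pow_le_one₀ hθ.1 hθ.2
  exact pow_mul_one_sub_pow_le_of_pos ha hb hθ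

noncomputable def posteriorMean {X : Type*} [MeasurableSpace X] (μ : Measure X)
    (ℓ g : X → ℝ) : ℝ :=
  (∫ x, g x * ℓ x ∂μ) / ∫ x, ℓ x ∂μ

section Posterior

variable {X : Type*} [MeasurableSpace X] {μ : Measure X} {ℓ g : X → ℝ}

lemma posteriorMean_nonneg (hg : 0 ≤ g) (hℓ : 0 ≤ ℓ) : 0 ≤ posteriorMean μ ℓ g :=
  div_nonneg (integral_nonneg fun x => mul_nonneg (hg x) (hℓ x)) (integral_nonneg hℓ)

lemma posteriorMean_const_sub (hgℓ : Integrable (fun x => g x * ℓ x) μ) (hℓ : Integrable ℓ μ)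
    (hℓ₀ : ∫ x, ℓ x ∂μ ≠ 0) (B : ℝ) :
    posteriorMean μ ℓ (fun x => B - g x) = B - posteriorMean μ ℓ g := by
  simp only [posteriorMean, sub_mul]
  rw [integral_sub (hℓ.const_mul B) hgℓ, integral_const_mul, sub_div,
    mul_div_cancel_right₀ _ hℓ₀]

lemma le_integral_of_forall_le [IsProbabilityMeasure μ] {c : ℝ} (hℓ : Integrable ℓ μ)
    (hcℓ : ∀ x, c ≤ ℓ x) : c ≤ ∫ x, ℓ x ∂μ := by
  simpa using integral_mono (integrable_const c) hℓ hcℓ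

lemma posteriorMean_le_of_le [IsProbabilityMeasure μ] {c B : ℝ} (hc : 0 < c)
    (hcℓ : ∀ x, c ≤ ℓ x) (hgB : ∀ x, g x ≤ B) (hgℓ : Integrable (fun x => g x * ℓ x) μ)
    (hℓ : Integrable ℓ μ) : posteriorMean μ ℓ g ≤ B := by
  have hℓ₀ : ∫ x, ℓ x ∂μ ≠ 0 := (hc.trans_le (le_integral_of_forall_le hℓ hcℓ)).ne'
  rw [← sub_nonneg, ← posteriorMean_const_sub hgℓ hℓ hℓ₀]
  exact posteriorMean_nonneg (fun x => sub_nonneg.2 (hgB x)) fun x => hc.le.trans (hcℓ x)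

lemma posteriorMean_le_mul_integral [IsProbabilityMeasure μ] {c C : ℝ} (hc : 0 < c)
    (hcℓ : ∀ x, c ≤ ℓ x) (hℓC : ∀ x, ℓ x ≤ C) (hg₀ : 0 ≤ g) (hg : Integrable g μ)
    (hgℓ : Integrable (fun x => g x * ℓ x) μ) (hℓ : Integrable ℓ μ) :
    posteriorMean μ ℓ g ≤ C / c * ∫ x, g x ∂μ := by
  have hnum : ∫ x, g x * ℓ x ∂μ ≤ C * ∫ x, g x ∂μ := by
    rw [← integral_const_mul]
    refine integral_mono hgℓ (hg.const_mul C) fun x => ?_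
    simpa only [mul_comm C] using mul_le_mul_of_nonneg_left (hℓC x) (hg₀ x)
  have hden : c ≤ ∫ x, ℓ x ∂μ := le_integral_of_forall_le hℓ hcℓ
  have hnum₀ : 0 ≤ C * ∫ x, g x ∂μ :=
    (integral_nonneg fun x => mul_nonneg (hg₀ x) (hc.le.trans (hcℓ x))).trans hnum
  calc posteriorMean μ ℓ g ≤ (C * ∫ x, g x ∂μ) / c := div_le_div₀ hnum₀ hnum hc hden
    _ = C / c * ∫ x, g x ∂μ := by ring

lemma sub_posteriorMean_le_mul_sub_integral [IsProbabilityMeasure μ] {c C B : ℝ} (hc : 0 < c)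
    (hcℓ : ∀ x, c ≤ ℓ x) (hℓC : ∀ x, ℓ x ≤ C) (hgB : ∀ x, g x ≤ B) (hg : Integrable g μ)
    (hgℓ : Integrable (fun x => g x * ℓ x) μ) (hℓ : Integrable ℓ μ) :
    B - posteriorMean μ ℓ g ≤ C / c * (B - ∫ x, g x ∂μ) := by
  have hℓ₀ : ∫ x, ℓ x ∂μ ≠ 0 := (hc.trans_le (le_integral_of_forall_le hℓ hcℓ)).ne'
  have hBg : ∫ x, (B - g x) ∂μ = B - ∫ x, g x ∂μ := by
    rw [integral_sub (integrable_const B) hg]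
    simp
  rw [← posteriorMean_const_sub hgℓ hℓ hℓ₀, ← hBg]
  refine posteriorMean_le_mul_integral hc hcℓ hℓC (fun x => sub_nonneg.2 (hgB x))
    ((integrable_const B).sub hg) ?_ hℓ
  simp only [sub_mul]
  exact (hℓ.const_mul B).sub hgℓ

end Posterior

section Extrema

variable {ι : Type*} {M : Set ι} {r s : ι → ℝ} {K : ℝ}

lemma sInf_eq_zero_of_le_mul (hM : M.Nonempty) (hK : 0 < K) (hr₀ : ∀ i ∈ M, 0 ≤ r i)
    (hrs : ∀ i ∈ M, r i ≤ K * s i) (hs : sInf {x | ∃ i ∈ M, x = s i} = 0) :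
    sInf {x | ∃ i ∈ M, x = r i} = 0 := by
  obtain ⟨i₀, hi₀⟩ := hM
  have hlower : ∀ x ∈ {x | ∃ i ∈ M, x = r i}, 0 ≤ x := by
    rintro _ ⟨i, hi, rfl⟩
    exact hr₀ i hi
  refine le_antisymm ?_ (le_csInf ⟨_, i₀, hi₀, rfl⟩ hlower)
  have : sInf {x | ∃ i ∈ M, x = r i} / K ≤ sInf {x | ∃ i ∈ M, x = s i} := by
    refine le_csInf ⟨_, i₀, hi₀, rfl⟩ ?_
    rintro _ ⟨i, hi, rfl⟩
    rw [div_le_iff₀' hK]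
    exact (csInf_le ⟨0, hlower⟩ ⟨i, hi, rfl⟩).trans (hrs i hi)
  rwa [hs, div_le_iff₀ hK, zero_mul] at this

lemma sSup_eq_of_sub_le_mul {B : ℝ} (hM : M.Nonempty) (hK : 0 < K) (hrB : ∀ i ∈ M, r i ≤ B)
    (hrs : ∀ i ∈ M, B - r i ≤ K * (B - s i)) (hs : sSup {x | ∃ i ∈ M, x = s i} = B) :
    sSup {x | ∃ i ∈ M, x = r i} = B := by
  obtain ⟨i₀, hi₀⟩ := hM
  have hupper : ∀ x ∈ {x | ∃ i ∈ M, x = r i}, x ≤ B := by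
    rintro _ ⟨i, hi, rfl⟩
    exact hrB i hi
  refine le_antisymm (csSup_le ⟨_, i₀, hi₀, rfl⟩ hupper) ?_
  have : sSup {x | ∃ i ∈ M, x = s i} ≤ B - (B - sSup {x | ∃ i ∈ M, x = r i}) / K := by
    refine csSup_le ⟨_, i₀, hi₀, rfl⟩ ?_
    rintro _ ⟨i, hi, rfl⟩
    rw [le_sub_comm, div_le_iff₀' hK]
    exact (sub_le_sub_left (le_csSup ⟨B, hupper⟩ ⟨i, hi, rfl⟩) B).trans (hrs i hi)
  rwa [hs, le_sub_self_iff, div_le_iff₀ hK, zero_mul, sub_nonpos] at this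

end Extrema

lemma Continuous.exists_pos_lower_upper_bound {X : Type*} [TopologicalSpace X] [CompactSpace X]
    [Nonempty X] {ℓ : X → ℝ} (hℓ : Continuous ℓ) (hℓpos : ∀ x, 0 < ℓ x) :
    ∃ c C : ℝ, 0 < c ∧ c ≤ C ∧ (∀ x, c ≤ ℓ x) ∧ ∀ x, ℓ x ≤ C := by
  obtain ⟨xmin, -, hmin⟩ := isCompact_univ.exists_isMinOn Set.univ_nonempty hℓ.continuousOn
  obtain ⟨xmax, -, hmax⟩ := isCompact_univ.exists_isMaxOn Set.univ_nonempty hℓ.continuousOn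
  exact ⟨ℓ xmin, ℓ xmax, hℓpos xmin, hmax (Set.mem_univ xmin), fun x => hmin (Set.mem_univ x),
    fun x => hmax (Set.mem_univ x)⟩

section Compact

variable {X : Type*} [TopologicalSpace X] [CompactSpace X] [MeasurableSpace X]
  [OpensMeasurableSpace X] {M : Set (Measure X)} {ℓ f : X → ℝ}

lemma Continuous.integrable_of_compactSpace {μ : Measure X} [IsFiniteMeasure μ]
    (hf : Continuous f) : Integrable f μ :=
  hf.integrable_of_hasCompactSupport (.of_compactSpace f)

theorem sInf_posteriorMean_eq_zero (hM : M.Nonempty)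
    (hprob : ∀ μ ∈ M, IsProbabilityMeasure μ) (hℓ : Continuous ℓ) (hℓpos : ∀ x, 0 < ℓ x)
    (hf : Continuous f) (hf₀ : 0 ≤ f) (hs : sInf {s | ∃ μ ∈ M, s = ∫ x, f x ∂μ} = 0) :
    sInf {r | ∃ μ ∈ M, r = posteriorMean μ ℓ f} = 0 := by
  obtain ⟨μ₀, hμ₀⟩ := hM
  have := hprob μ₀ hμ₀
  have := nonempty_of_isProbabilityMeasure μ₀
  obtain ⟨c, C, hc, hcC, hcℓ, hℓC⟩ := hℓ.exists_pos_lower_upper_bound hℓpos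
  refine sInf_eq_zero_of_le_mul ⟨μ₀, hμ₀⟩ (div_pos (hc.trans_le hcC) hc)
    (fun μ _ => posteriorMean_nonneg hf₀ fun x => (hℓpos x).le) (fun μ hμ => ?_) hs
  have := hprob μ hμ
  exact posteriorMean_le_mul_integral hc hcℓ hℓC hf₀ hf.integrable_of_compactSpace
    (hf.mul hℓ).integrable_of_compactSpace hℓ.integrable_of_compactSpace

theorem sSup_posteriorMean_eq {B : ℝ} (hM : M.Nonempty)
    (hprob : ∀ μ ∈ M, IsProbabilityMeasure μ) (hℓ : Continuous ℓ) (hℓpos : ∀ x, 0 < ℓ x)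
    (hf : Continuous f) (hfB : ∀ x, f x ≤ B) (hs : sSup {s | ∃ μ ∈ M, s = ∫ x, f x ∂μ} = B) :
    sSup {r | ∃ μ ∈ M, r = posteriorMean μ ℓ f} = B := by
  obtain ⟨μ₀, hμ₀⟩ := hM
  have := hprob μ₀ hμ₀
  have := nonempty_of_isProbabilityMeasure μ₀
  obtain ⟨c, C, hc, hcC, hcℓ, hℓC⟩ := hℓ.exists_pos_lower_upper_bound hℓpos
  refine sSup_eq_of_sub_le_mul ⟨μ₀, hμ₀⟩ (div_pos (hc.trans_le hcC) hc) (fun μ hμ => ?_)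
    (fun μ hμ => ?_) hs
  all_goals have := hprob μ hμ
  · exact posteriorMean_le_of_le hc hcℓ hfB (hf.mul hℓ).integrable_of_compactSpace
      hℓ.integrable_of_compactSpace
  · exact sub_posteriorMean_le_mul_sub_integral hc hcℓ hℓC hfB hf.integrable_of_compactSpace
      (hf.mul hℓ).integrable_of_compactSpace hℓ.integrable_of_compactSpace

end Compact

theorem diagnostic_test_no_learning_general
    (ε₁ ε₂ : ℝ) (hε₁ : ε₁ ∈ Set.Ioo (0 : ℝ) 1) (hε₂ : ε₂ ∈ Set.Ioo (0 : ℝ) 1)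
    (N n : ℕ) :
    letI L : ℝ → ℝ := fun θ =>
      ((1 - ε₂) * θ + ε₁ * (1 - θ)) ^ n * (ε₂ * θ + (1 - ε₁) * (1 - θ)) ^ (N - n)
    ContinuousOn L (Set.Icc (0 : ℝ) 1) ∧
    (∀ θ ∈ Set.Icc (0 : ℝ) 1, 0 < L θ) ∧
    (∀ M : Set (Measure (Set.Icc (0 : ℝ) 1)), M.Nonempty →
      (∀ μ ∈ M, IsProbabilityMeasure μ) →
      ∀ n'₁ n'₂ : ℕ, 0 < n'₁ + n'₂ →
      sInf {r | ∃ μ ∈ M,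
          r = ∫ θ : Set.Icc (0 : ℝ) 1, (θ : ℝ) ^ n'₁ * (1 - (θ : ℝ)) ^ n'₂ ∂μ} = 0 →
      sSup {r | ∃ μ ∈ M,
          r = ∫ θ : Set.Icc (0 : ℝ) 1, (θ : ℝ) ^ n'₁ * (1 - (θ : ℝ)) ^ n'₂ ∂μ}
        = ((n'₁ : ℝ) / ((n'₁ + n'₂ : ℕ) : ℝ)) ^ n'₁ *
          ((n'₂ : ℝ) / ((n'₁ + n'₂ : ℕ) : ℝ)) ^ n'₂ →
      (sInf {r | ∃ μ ∈ M,
          r = (∫ θ : Set.Icc (0 : ℝ) 1,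
                (θ : ℝ) ^ n'₁ * (1 - (θ : ℝ)) ^ n'₂ * L (θ : ℝ) ∂μ) /
              (∫ θ : Set.Icc (0 : ℝ) 1, L (θ : ℝ) ∂μ)} = 0 ∧
       sSup {r | ∃ μ ∈ M,
          r = (∫ θ : Set.Icc (0 : ℝ) 1,
                (θ : ℝ) ^ n'₁ * (1 - (θ : ℝ)) ^ n'₂ * L (θ : ℝ) ∂μ) /
              (∫ θ : Set.Icc (0 : ℝ) 1, L (θ : ℝ) ∂μ)}
         = ((n'₁ : ℝ) / ((n'₁ + n'₂ : ℕ) : ℝ)) ^ n'₁ *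
           ((n'₂ : ℝ) / ((n'₁ + n'₂ : ℕ) : ℝ)) ^ n'₂)) := by
  set L : ℝ → ℝ := fun θ =>
    ((1 - ε₂) * θ + ε₁ * (1 - θ)) ^ n * (ε₂ * θ + (1 - ε₁) * (1 - θ)) ^ (N - n)
  have hLcont : Continuous L := by fun_prop
  have hLpos : ∀ θ ∈ Set.Icc (0 : ℝ) 1, 0 < L θ := fun θ hθ =>
    mul_pos (pow_pos (mul_add_mul_one_sub_pos (sub_pos.2 hε₂.2) hε₁.1 hθ) n)
      (pow_pos (mul_add_mul_one_sub_pos hε₂.1 (sub_pos.2 hε₁.2) hθ) (N - n))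
  refine ⟨hLcont.continuousOn, hLpos, fun M hM hprob a b hab hInf hSup => ?_⟩
  have hℓ : Continuous fun θ : Set.Icc (0 : ℝ) 1 => L θ := hLcont.comp continuous_subtype_val
  have hf : Continuous fun θ : Set.Icc (0 : ℝ) 1 => (θ : ℝ) ^ a * (1 - (θ : ℝ)) ^ b := by
    fun_prop
  exact ⟨sInf_posteriorMean_eq_zero hM hprob hℓ (fun θ => hLpos θ θ.2) hf
      (fun θ => mul_nonneg (pow_nonneg θ.2.1 a) (pow_nonneg (sub_nonneg.2 θ.2.2) b)) hInf,
    sSup_posteriorMean_eq hM hprob hℓ (fun θ => hLpos θ θ.2) hf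
      (fun θ => pow_mul_one_sub_pow_le hab θ.2) hSup⟩

/-- **Example 2 (diagnostic test).**
Fix `ε₁, ε₂ ∈ (0,1)`, integers `N ≥ 1` and `0 ≤ n ≤ N`, and the diagnostic-test
likelihood `L θ = ((1-ε₂)θ + ε₁(1-θ))^n · (ε₂θ + (1-ε₁)(1-θ))^{N-n}` on `[0,1]`.
Then `L` is continuous and strictly positive on `[0,1]`.  Consequently, for any
nonempty set `M` of Borel probability measures on `[0,1]` and nonnegative integers
`n'₁, n'₂` with `N' = n'₁ + n'₂ > 0`: if the prior predictive probabilities are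
vacuous, `inf_{μ∈M} ∫ θ^{n'₁}(1-θ)^{n'₂} dμ = 0` and
`sup_{μ∈M} ∫ θ^{n'₁}(1-θ)^{n'₂} dμ = (n'₁/N')^{n'₁}(n'₂/N')^{n'₂}`, then the
posterior predictive probabilities are vacuous as well. -/
theorem diagnostic_test_no_learning
    (ε₁ ε₂ : ℝ) (hε₁ : ε₁ ∈ Set.Ioo (0 : ℝ) 1) (hε₂ : ε₂ ∈ Set.Ioo (0 : ℝ) 1)
    (N n : ℕ) (hN : 1 ≤ N) (hn : n ≤ N) :
    letI L : ℝ → ℝ := fun θ =>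
      ((1 - ε₂) * θ + ε₁ * (1 - θ)) ^ n * (ε₂ * θ + (1 - ε₁) * (1 - θ)) ^ (N - n)
    ContinuousOn L (Set.Icc (0 : ℝ) 1) ∧
    (∀ θ ∈ Set.Icc (0 : ℝ) 1, 0 < L θ) ∧
    (∀ M : Set (Measure (Set.Icc (0 : ℝ) 1)), M.Nonempty →
      (∀ μ ∈ M, IsProbabilityMeasure μ) →
      ∀ n'₁ n'₂ : ℕ, 0 < n'₁ + n'₂ →
      sInf {r | ∃ μ ∈ M,
          r = ∫ θ : Set.Icc (0 : ℝ) 1, (θ : ℝ) ^ n'₁ * (1 - (θ : ℝ)) ^ n'₂ ∂μ} = 0 →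
      sSup {r | ∃ μ ∈ M,
          r = ∫ θ : Set.Icc (0 : ℝ) 1, (θ : ℝ) ^ n'₁ * (1 - (θ : ℝ)) ^ n'₂ ∂μ}
        = ((n'₁ : ℝ) / ((n'₁ + n'₂ : ℕ) : ℝ)) ^ n'₁ *
          ((n'₂ : ℝ) / ((n'₁ + n'₂ : ℕ) : ℝ)) ^ n'₂ →
      (sInf {r | ∃ μ ∈ M,
          r = (∫ θ : Set.Icc (0 : ℝ) 1,
                (θ : ℝ) ^ n'₁ * (1 - (θ : ℝ)) ^ n'₂ * L (θ : ℝ) ∂μ) /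
              (∫ θ : Set.Icc (0 : ℝ) 1, L (θ : ℝ) ∂μ)} = 0 ∧
       sSup {r | ∃ μ ∈ M,
          r = (∫ θ : Set.Icc (0 : ℝ) 1,
                (θ : ℝ) ^ n'₁ * (1 - (θ : ℝ)) ^ n'₂ * L (θ : ℝ) ∂μ) /
              (∫ θ : Set.Icc (0 : ℝ) 1, L (θ : ℝ) ∂μ)}
         = ((n'₁ : ℝ) / ((n'₁ + n'₂ : ℕ) : ℝ)) ^ n'₁ *
           ((n'₂ : ℝ) / ((n'₁ + n'₂ : ℕ) : ℝ)) ^ n'₂)) :=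
  diagnostic_test_no_learning_general ε₁ ε₂ hε₁ hε₂ N n
end
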